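/- Let p ∈ (1,∞) and let A = U + iV be an n×n complex matrix (U = Re A, V = Im A entrywise) such that U_s is positive definite, and let A_s = (A + Aᵀ)/2 be the symmetric part of A. Then the following are equivalent: (1) Δ_p(A_s) ≥ 0; (2) |p − 2|·|⟨Vα,α⟩| ≤ 2√(p−1)·⟨Uα,α⟩ for all α ∈ ℝⁿ; (3) for every α ∈ ℝⁿ, the complex number ⟨Aα,α⟩ lies in the closed sector S̄_{φ_p} = {0} ∪ { z ∈ ℂ∖{0} : |arg z| ≤ φ_p }, where φ_p = arccos|1 − 2/p|. -/

import Mathlib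

/-!
With `ξ = α + iβ` and `A_s = U_s + iV_s`, one has
`Re⟨A_s ξ, 𝒥_p ξ⟩ = ⟨U_s α, α⟩/p + ⟨U_s β, β⟩/q + (1 − 2/p)⟨V_s α, β⟩`, and since this is
2-homogeneous and the unit sphere is compact, `Δ_p(A_s) ≥ 0` says exactly that this real form is
nonnegative. On `β = tα` it is a quadratic polynomial in `t`, and its discriminant condition is (2);
conversely, polarizing (2) bounds the cross term `|p − 2||⟨V_s α, β⟩|` by
`⟨U_s α, α⟩ + (p − 1)⟨U_s β, β⟩`. Finally `⟨Aα, α⟩ = ⟨Uα, α⟩ + i⟨Vα, α⟩`, and for `|c| ≤ 1`,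
`|arg z| ≤ arccos c` iff `c|z| ≤ Re z`, which for `c = |1 − 2/p|` becomes (2) after squaring.
-/

open scoped BigOperators ComplexConjugate Matrix

noncomputable section

namespace Paper

/-- The sesquilinear pairing `⟨z,w⟩ = ∑ j, z j * conj (w j)` on `ℂⁿ`. -/
def herm {n : ℕ} (z w : Fin n → ℂ) : ℂ := ∑ j, z j * conj (w j)

/-- Euclidean norm of a complex vector, `|z| = √⟨z,z⟩`. -/
def cnorm {n : ℕ} (z : Fin n → ℂ) : ℝ := Real.sqrt (herm z z).re

/-- Componentwise complex conjugate of a vector. -/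
def vconj {n : ℕ} (z : Fin n → ℂ) : Fin n → ℂ := fun j => conj (z j)

/-- The ℝ-linear map `𝒥_p(α + iβ) = α/p + iβ/q`, where `1/p + 1/q = 1`,
i.e. `1/q = 1 - 1/p`. -/
def Jmap {n : ℕ} (p : ℝ) (ξ : Fin n → ℂ) : Fin n → ℂ :=
  fun j => (((ξ j).re / p : ℝ) : ℂ) + Complex.I * (((ξ j).im * (1 - 1 / p) : ℝ) : ℂ)

/-- `Δ_p(A) = 2 · min { Re⟨Aξ, 𝒥_p ξ⟩ : ξ ∈ ℂⁿ, |ξ| = 1 }`. -/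
def Deltap {n : ℕ} (p : ℝ) (A : Matrix (Fin n) (Fin n) ℂ) : ℝ :=
  sInf {t : ℝ | ∃ ξ : Fin n → ℂ, cnorm ξ = 1 ∧
    t = 2 * (herm (A.mulVec ξ) (Jmap p ξ)).re}

/-- `Δ_r(A) = min { Re⟨Aξ,ξ⟩ − |1 − 2/r|·|⟨Aξ,ξ̄⟩| : |ξ| = 1 }`, the extension of
`Δ_p` to all `r > 0`. -/
def DeltaGen {n : ℕ} (r : ℝ) (A : Matrix (Fin n) (Fin n) ℂ) : ℝ :=
  sInf {t : ℝ | ∃ ξ : Fin n → ℂ, cnorm ξ = 1 ∧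
    t = (herm (A.mulVec ξ) ξ).re - |1 - 2 / r| * norm (herm (A.mulVec ξ) (vconj ξ))}

/-- Membership in the class `𝒜_{λ,Λ}`:
`Re⟨Aξ,ξ⟩ ≥ λ|ξ|²` and `|⟨Aξ,η⟩| ≤ Λ|ξ||η|`. -/
def memA {n : ℕ} (lam Lam : ℝ) (A : Matrix (Fin n) (Fin n) ℂ) : Prop :=
  (∀ ξ : Fin n → ℂ, lam * cnorm ξ ^ 2 ≤ (herm (A.mulVec ξ) ξ).re) ∧
  (∀ ξ η : Fin n → ℂ, norm (herm (A.mulVec ξ) η) ≤ Lam * cnorm ξ * cnorm η)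

/-- `λ_A = min { Re⟨Aξ,ξ⟩ : |ξ| = 1 }`. -/
def lamA {n : ℕ} (A : Matrix (Fin n) (Fin n) ℂ) : ℝ :=
  sInf {t : ℝ | ∃ ξ : Fin n → ℂ, cnorm ξ = 1 ∧ t = (herm (A.mulVec ξ) ξ).re}

/-- `Λ_A = max { |⟨Aξ,η⟩| : |ξ| = |η| = 1 }`. -/
def LamA {n : ℕ} (A : Matrix (Fin n) (Fin n) ℂ) : ℝ :=
  sSup {t : ℝ | ∃ ξ η : Fin n → ℂ, cnorm ξ = 1 ∧ cnorm η = 1 ∧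
    t = norm (herm (A.mulVec ξ) η)}

/-- `μ(A) = inf { Re⟨Aξ,ξ⟩/|⟨Aξ,ξ̄⟩| : ⟨Aξ,ξ̄⟩ ≠ 0 }`. -/
def muA {n : ℕ} (A : Matrix (Fin n) (Fin n) ℂ) : ℝ :=
  sInf {t : ℝ | ∃ ξ : Fin n → ℂ, herm (A.mulVec ξ) (vconj ξ) ≠ 0 ∧
    t = (herm (A.mulVec ξ) ξ).re / norm (herm (A.mulVec ξ) (vconj ξ))}

/-- Second real Fréchet derivative of `F : ℂ → ℝ` at `ζ`, as a bilinear expression. -/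
def D2 (F : ℂ → ℝ) (ζ : ℂ) (ξ η : ℂ) : ℝ := fderiv ℝ (fderiv ℝ F) ζ ξ η

/-- `F : ℂ → ℝ` is twice real-Fréchet differentiable at `ζ`. -/
def TwiceDiffAt (F : ℂ → ℝ) (ζ : ℂ) : Prop :=
  DifferentiableAt ℝ F ζ ∧ DifferentiableAt ℝ (fderiv ℝ F) ζ

/-- `H_F^A[ζ;ξ] = ∑ j, D²F(ζ)[ξ_j, (Aξ)_j]`. -/
def HFA {n : ℕ} (F : ℂ → ℝ) (A : Matrix (Fin n) (Fin n) ℂ) (ζ : ℂ) (ξ : Fin n → ℂ) : ℝ :=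
  ∑ j, D2 F ζ (ξ j) (A.mulVec ξ j)

/-- The power function `F_r(ζ) = |ζ|^r`. -/
def Fpow (r : ℝ) (ζ : ℂ) : ℝ := norm ζ ^ r

/-- Real dot product. -/
def rdot {n : ℕ} (u v : Fin n → ℝ) : ℝ := ∑ j, u j * v j

/-- Euclidean norm of a real vector. -/
def enorm {n : ℕ} (u : Fin n → ℝ) : ℝ := Real.sqrt (∑ j, u j ^ 2)

/-- Operator norm `‖M‖ = max { |Mu| : |u| = 1 }` of a real matrix. -/
def opnormR {n : ℕ} (M : Matrix (Fin n) (Fin n) ℝ) : ℝ :=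
  sSup {t : ℝ | ∃ u : Fin n → ℝ, enorm u = 1 ∧ t = enorm (M.mulVec u)}

/-- Symmetric part `M_s = (M + Mᵀ)/2`. -/
def symPart {n : ℕ} {R : Type*} [Field R] (M : Matrix (Fin n) (Fin n) R) :
    Matrix (Fin n) (Fin n) R := (2 : R)⁻¹ • (M + Mᵀ)

/-- Antisymmetric part `M_a = (M − Mᵀ)/2`. -/
def antiPart {n : ℕ} {R : Type*} [Field R] (M : Matrix (Fin n) (Fin n) R) :
    Matrix (Fin n) (Fin n) R := (2 : R)⁻¹ • (M - Mᵀ)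

/-- `𝒱_p(V) = ((p−2)/(2√(p−1)))·V_s + (p/(2√(p−1)))·V_a`. -/
def Vmap {n : ℕ} (p : ℝ) (V : Matrix (Fin n) (Fin n) ℝ) : Matrix (Fin n) (Fin n) ℝ :=
  ((p - 2) / (2 * Real.sqrt (p - 1))) • symPart V + (p / (2 * Real.sqrt (p - 1))) • antiPart V

/-- A real matrix is (symmetric) positive definite. -/
def RPosDef {n : ℕ} (M : Matrix (Fin n) (Fin n) ℝ) : Prop :=
  Mᵀ = M ∧ ∀ u : Fin n → ℝ, u ≠ 0 → 0 < rdot (M.mulVec u) u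

/-- The complex matrix `U + iV` built from two real matrices. -/
def cplx {n : ℕ} (U V : Matrix (Fin n) (Fin n) ℝ) : Matrix (Fin n) (Fin n) ℂ :=
  Matrix.of fun i j => ((U i j : ℂ) + Complex.I * (V i j : ℂ))

/-- `Φ : ℂ×ℂ → ℝ` is twice real-Fréchet differentiable at `v`. -/
def TwiceDiffAt2 (Φ : ℂ × ℂ → ℝ) (v : ℂ × ℂ) : Prop :=
  DifferentiableAt ℝ Φ v ∧ DifferentiableAt ℝ (fderiv ℝ Φ) v

/-- `H_Φ^{(A,B)}[v;ω] = ∑ j, D²Φ(v)[(ω₁ⱼ, ω₂ⱼ), ((Aω₁)ⱼ, (Bω₂)ⱼ)]`. -/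
def HAB {n : ℕ} (Φ : ℂ × ℂ → ℝ) (A B : Matrix (Fin n) (Fin n) ℂ) (v : ℂ × ℂ)
    (ω₁ ω₂ : Fin n → ℂ) : ℝ :=
  ∑ j, fderiv ℝ (fderiv ℝ Φ) v (ω₁ j, ω₂ j) (A.mulVec ω₁ j, B.mulVec ω₂ j)

/-- The Nazarov–Treil Bellman function `Q_{p,δ}` (with `q = p/(p−1)` passed explicitly). -/
def QNT (p q δ : ℝ) (ζ η : ℂ) : ℝ :=
  norm ζ ^ p + norm η ^ q +
    δ * (if norm ζ ^ p ≤ norm η ^ q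
      then norm ζ ^ (2 : ℝ) * norm η ^ (2 - q)
      else (2 / p) * norm ζ ^ p + (2 / q - 1) * norm η ^ q)

/-- `Δ_p` of a matrix-valued function on a subset `Ω ⊆ ℝᵐ`:
`2 · essinf_{x∈Ω} min_{|ξ|=1} Re⟨A(x)ξ, 𝒥_p ξ⟩`. -/
def DeltapAE {m n : ℕ} (p : ℝ) (A : (Fin m → ℝ) → Matrix (Fin n) (Fin n) ℂ)
    (Ω : Set (Fin m → ℝ)) : ℝ :=
  2 * essInf (fun x => sInf {t : ℝ | ∃ ξ : Fin n → ℂ, cnorm ξ = 1 ∧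
      t = (herm ((A x).mulVec ξ) (Jmap p ξ)).re}) (MeasureTheory.volume.restrict Ω)

end Paper

namespace Paper

open Real

variable {n : ℕ}

theorem rdot_eq_dotProduct (u v : Fin n → ℝ) : rdot u v = u ⬝ᵥ v := rfl

theorem mulVec_dotProduct_comm (M : Matrix (Fin n) (Fin n) ℝ) (u v : Fin n → ℝ) :
    M *ᵥ u ⬝ᵥ v = Mᵀ *ᵥ v ⬝ᵥ u := by
  rw [dotProduct_comm, Matrix.dotProduct_mulVec, Matrix.mulVec_transpose]

theorem symPart_mulVec_dotProduct_self (M : Matrix (Fin n) (Fin n) ℝ) (u : Fin n → ℝ) :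
    symPart M *ᵥ u ⬝ᵥ u = M *ᵥ u ⬝ᵥ u := by
  rw [symPart, Matrix.smul_mulVec, smul_dotProduct, Matrix.add_mulVec, add_dotProduct,
    mulVec_dotProduct_comm Mᵀ, Matrix.transpose_transpose, smul_eq_mul]
  ring

theorem symPart_transpose (M : Matrix (Fin n) (Fin n) ℝ) : (symPart M)ᵀ = symPart M := by
  rw [symPart, Matrix.transpose_smul, Matrix.transpose_add, Matrix.transpose_transpose, add_comm]

theorem symPart_cplx (U V : Matrix (Fin n) (Fin n) ℝ) :
    symPart (cplx U V) = cplx (symPart U) (symPart V) := by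
  ext i j
  simp only [symPart, cplx, Matrix.smul_apply, Matrix.add_apply, Matrix.transpose_apply,
    Matrix.of_apply, smul_eq_mul]
  push_cast
  ring

theorem re_herm (z w : Fin n → ℂ) :
    (herm z w).re = Complex.re ∘ z ⬝ᵥ Complex.re ∘ w + Complex.im ∘ z ⬝ᵥ Complex.im ∘ w := by
  simp only [herm, Complex.re_sum, Complex.mul_re, Complex.conj_re, Complex.conj_im,
    dotProduct, Function.comp_apply, ← Finset.sum_add_distrib]
  exact Finset.sum_congr rfl fun _ _ => by ring

theorem im_herm (z w : Fin n → ℂ) :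
    (herm z w).im = Complex.im ∘ z ⬝ᵥ Complex.re ∘ w - Complex.re ∘ z ⬝ᵥ Complex.im ∘ w := by
  simp only [herm, Complex.im_sum, Complex.mul_im, Complex.conj_re, Complex.conj_im,
    dotProduct, Function.comp_apply, ← Finset.sum_sub_distrib]
  exact Finset.sum_congr rfl fun _ _ => by ring

theorem re_cplx_mulVec (P Q : Matrix (Fin n) (Fin n) ℝ) (ξ : Fin n → ℂ) :
    Complex.re ∘ (cplx P Q *ᵥ ξ) = P *ᵥ (Complex.re ∘ ξ) - Q *ᵥ (Complex.im ∘ ξ) := by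
  ext j
  simp [cplx, Matrix.mulVec, dotProduct, Complex.re_sum, Complex.mul_re, add_mul,
    Finset.sum_add_distrib, sub_eq_add_neg]

theorem im_cplx_mulVec (P Q : Matrix (Fin n) (Fin n) ℝ) (ξ : Fin n → ℂ) :
    Complex.im ∘ (cplx P Q *ᵥ ξ) = P *ᵥ (Complex.im ∘ ξ) + Q *ᵥ (Complex.re ∘ ξ) := by
  ext j
  simp [cplx, Matrix.mulVec, dotProduct, Complex.im_sum, Complex.mul_im, add_mul,
    Finset.sum_add_distrib]

theorem herm_cplx_mulVec_ofReal (U V : Matrix (Fin n) (Fin n) ℝ) (α : Fin n → ℝ) :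
    herm (cplx U V *ᵥ fun j => (α j : ℂ)) (fun j => (α j : ℂ))
      = ⟨U *ᵥ α ⬝ᵥ α, V *ᵥ α ⬝ᵥ α⟩ := by
  have hre : Complex.re ∘ (fun j => (α j : ℂ)) = α := rfl
  have him : Complex.im ∘ (fun j => (α j : ℂ)) = 0 := rfl
  apply Complex.ext
  · rw [re_herm, re_cplx_mulVec, im_cplx_mulVec, hre, him]
    simp
  · rw [im_herm, re_cplx_mulVec, im_cplx_mulVec, hre, him]
    simp

/-- The real form of `Re⟨(P + iQ)(α + iβ), 𝒥_p(α + iβ)⟩` for symmetric `Q`. -/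
def jForm (p : ℝ) (P Q : Matrix (Fin n) (Fin n) ℝ) (α β : Fin n → ℝ) : ℝ :=
  1 / p * (P *ᵥ α ⬝ᵥ α) + (1 - 1 / p) * (P *ᵥ β ⬝ᵥ β) + (1 - 2 / p) * (Q *ᵥ α ⬝ᵥ β)

theorem re_herm_cplx_mulVec_Jmap {P Q : Matrix (Fin n) (Fin n) ℝ} (hQ : Qᵀ = Q) (p : ℝ)
    (ξ : Fin n → ℂ) :
    (herm (cplx P Q *ᵥ ξ) (Jmap p ξ)).re = jForm p P Q (Complex.re ∘ ξ) (Complex.im ∘ ξ) := by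
  have hre : Complex.re ∘ Jmap p ξ = (1 / p) • Complex.re ∘ ξ := by
    ext j
    simp only [Jmap, Function.comp_apply, Pi.smul_apply, smul_eq_mul, Complex.add_re,
      Complex.ofReal_re, Complex.re_mul_ofReal, Complex.I_re, zero_mul, add_zero]
    ring
  have him : Complex.im ∘ Jmap p ξ = (1 - 1 / p) • Complex.im ∘ ξ := by
    ext j; simp [Jmap, mul_comm]
  rw [re_herm, re_cplx_mulVec, im_cplx_mulVec, hre, him, jForm]
  simp only [dotProduct_smul, sub_dotProduct, add_dotProduct, smul_eq_mul]
  rw [mulVec_dotProduct_comm Q (Complex.im ∘ ξ), hQ]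
  ring

theorem herm_smul_smul (c : ℝ) (z w : Fin n → ℂ) :
    herm (c • z) (c • w) = ((c ^ 2 : ℝ) : ℂ) * herm z w := by
  simp only [herm, Finset.mul_sum, Pi.smul_apply, Complex.real_smul, map_mul,
    Complex.conj_ofReal]
  exact Finset.sum_congr rfl fun _ _ => by push_cast; ring

theorem Jmap_smul (p c : ℝ) (ξ : Fin n → ℂ) : Jmap p (c • ξ) = c • Jmap p ξ := by
  ext j
  simp only [Jmap, Pi.smul_apply, Complex.real_smul, Complex.re_ofReal_mul,
    Complex.im_ofReal_mul]
  push_cast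
  ring

theorem cnorm_eq_norm (ξ : Fin n → ℂ) : cnorm ξ = ‖WithLp.toLp 2 ξ‖ := by
  rw [cnorm, EuclideanSpace.norm_eq, herm, Complex.re_sum]
  congr 1
  refine Finset.sum_congr rfl fun j _ => ?_
  rw [Complex.mul_conj, Complex.ofReal_re, Complex.normSq_eq_norm_sq]

theorem zero_le_sInf_image_sphere_iff {E : Type*} [NormedAddCommGroup E] [NormedSpace ℝ E]
    [ProperSpace E] {F : E → ℝ} (hF : Continuous F)
    (hhom : ∀ (c : ℝ) x, F (c • x) = c ^ 2 * F x) :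
    0 ≤ sInf (F '' Metric.sphere 0 1) ↔ ∀ x, 0 ≤ F x := by
  refine ⟨fun h x => ?_, fun h => Real.sInf_nonneg (by rintro _ ⟨x, -, rfl⟩; exact h x)⟩
  rcases eq_or_ne x 0 with rfl | hx
  · simpa using (hhom 0 0).symm.le
  have hbdd := (isCompact_sphere (0 : E) 1).bddBelow_image hF.continuousOn
  have hmem : ‖x‖⁻¹ • x ∈ Metric.sphere (0 : E) 1 := by
    simp [norm_smul, norm_ne_zero_iff.mpr hx]
  have hle := h.trans (csInf_le hbdd (Set.mem_image_of_mem F hmem))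
  have hx' : x = ‖x‖ • ‖x‖⁻¹ • x := by
    rw [smul_smul, mul_inv_cancel₀ (norm_ne_zero_iff.mpr hx), one_smul]
  rw [hx', hhom]
  positivity

theorem zero_le_Deltap_iff (p : ℝ) (A : Matrix (Fin n) (Fin n) ℂ) :
    0 ≤ Deltap p A ↔ ∀ ξ, 0 ≤ (herm (A *ᵥ ξ) (Jmap p ξ)).re := by
  set F : EuclideanSpace ℂ (Fin n) → ℝ := fun x => 2 * (herm (A *ᵥ x.ofLp) (Jmap p x.ofLp)).re
  have hset : {t : ℝ | ∃ ξ, cnorm ξ = 1 ∧ t = 2 * (herm (A *ᵥ ξ) (Jmap p ξ)).re}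
      = F '' Metric.sphere 0 1 := by
    ext t
    constructor
    · rintro ⟨ξ, hξ, rfl⟩
      exact ⟨WithLp.toLp 2 ξ, by simpa [← cnorm_eq_norm] using hξ, rfl⟩
    · rintro ⟨x, hx, rfl⟩
      exact ⟨x.ofLp, by simpa [cnorm_eq_norm] using hx, rfl⟩
  have hF : Continuous F := by
    unfold F herm Jmap
    fun_prop
  have hhom : ∀ (c : ℝ) x, F (c • x) = c ^ 2 * F x := by
    intro c x
    simp only [F, WithLp.ofLp_smul, Matrix.mulVec_smul, Jmap_smul, herm_smul_smul,
      Complex.re_ofReal_mul]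
    ring
  rw [Deltap, hset, zero_le_sInf_image_sphere_iff hF hhom]
  exact ⟨fun h ξ => by simpa [F] using h (WithLp.toLp 2 ξ),
    fun h x => by simpa [F] using h x.ofLp⟩

theorem zero_le_Deltap_cplx_iff {P Q : Matrix (Fin n) (Fin n) ℝ} (hQ : Qᵀ = Q) (p : ℝ) :
    0 ≤ Deltap p (cplx P Q) ↔ ∀ α β, 0 ≤ jForm p P Q α β := by
  simp only [zero_le_Deltap_iff, re_herm_cplx_mulVec_Jmap hQ]
  exact ⟨fun h α β => h fun j => ⟨α j, β j⟩, fun h ξ => h _ _⟩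

theorem abs_mul_le_of_forall_jForm_nonneg {p : ℝ} (hp : 1 < p)
    {P Q : Matrix (Fin n) (Fin n) ℝ} (h : ∀ α β, 0 ≤ jForm p P Q α β) (γ : Fin n → ℝ) :
    |p - 2| * |Q *ᵥ γ ⬝ᵥ γ| ≤ 2 * √(p - 1) * (P *ᵥ γ ⬝ᵥ γ) := by
  have hp0 : 0 < p := one_pos.trans hp
  have ha : 0 ≤ P *ᵥ γ ⬝ᵥ γ := by
    have := h γ 0
    simp only [jForm, Matrix.mulVec_zero, dotProduct_zero, mul_zero, add_zero] at this
    exact (mul_nonneg_iff_of_pos_left (by positivity)).1 this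
  have hdisc := discrim_le_zero (K := ℝ) (a := (1 - 1 / p) * (P *ᵥ γ ⬝ᵥ γ))
    (b := (1 - 2 / p) * (Q *ᵥ γ ⬝ᵥ γ)) (c := 1 / p * (P *ᵥ γ ⬝ᵥ γ)) fun t => by
      have := h γ (t • γ)
      simp only [jForm, Matrix.mulVec_smul, smul_dotProduct, dotProduct_smul, smul_eq_mul]
        at this
      linarith
  rw [discrim] at hdisc
  have hsq : ((p - 2) * (Q *ᵥ γ ⬝ᵥ γ)) ^ 2 ≤ 4 * (p - 1) * (P *ᵥ γ ⬝ᵥ γ) ^ 2 := by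
    have e : (p - 2) * (Q *ᵥ γ ⬝ᵥ γ) = p * ((1 - 2 / p) * (Q *ᵥ γ ⬝ᵥ γ)) := by
      field_simp
    rw [e, mul_pow]
    have := mul_le_mul_of_nonneg_left hdisc (sq_nonneg p)
    field_simp at this ⊢
    nlinarith
  rw [← abs_mul, ← sq_le_sq₀ (abs_nonneg _) (by positivity), sq_abs, mul_pow (2 * _),
    mul_pow 2, Real.sq_sqrt (by linarith)]
  linarith

theorem two_mul_abs_mulVec_dotProduct_le {P Q : Matrix (Fin n) (Fin n) ℝ} (hQ : Qᵀ = Q)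
    (h : ∀ γ, |Q *ᵥ γ ⬝ᵥ γ| ≤ P *ᵥ γ ⬝ᵥ γ) (u v : Fin n → ℝ) :
    2 * |Q *ᵥ u ⬝ᵥ v| ≤ P *ᵥ u ⬝ᵥ u + P *ᵥ v ⬝ᵥ v := by
  have polarization :
      Q *ᵥ (u + v) ⬝ᵥ (u + v) - Q *ᵥ (u - v) ⬝ᵥ (u - v) = 4 * (Q *ᵥ u ⬝ᵥ v) := by
    simp only [Matrix.mulVec_add, Matrix.mulVec_sub, add_dotProduct, sub_dotProduct,
      dotProduct_add, dotProduct_sub]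
    rw [mulVec_dotProduct_comm Q v u, hQ]
    ring
  have parallelogram : P *ᵥ (u + v) ⬝ᵥ (u + v) + P *ᵥ (u - v) ⬝ᵥ (u - v)
      = 2 * (P *ᵥ u ⬝ᵥ u) + 2 * (P *ᵥ v ⬝ᵥ v) := by
    simp only [Matrix.mulVec_add, Matrix.mulVec_sub, add_dotProduct, sub_dotProduct,
      dotProduct_add, dotProduct_sub]
    ring
  have := (abs_sub _ _).trans (add_le_add (h (u + v)) (h (u - v)))
  rw [polarization, abs_mul, parallelogram] at this
  norm_num at this
  linarith

theorem jForm_nonneg_of_forall_abs_mul_le {p : ℝ} (hp : 1 < p)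
    {P Q : Matrix (Fin n) (Fin n) ℝ} (hQ : Qᵀ = Q) (h : ∀ γ, |p - 2| * |Q *ᵥ γ ⬝ᵥ γ| ≤ 2 * √(p - 1) * (P *ᵥ γ ⬝ᵥ γ))
    (α β : Fin n → ℝ) : 0 ≤ jForm p P Q α β := by
  have hp0 : 0 < p := one_pos.trans hp
  set r := √(p - 1)
  have hr : 0 < r := Real.sqrt_pos.mpr (by linarith)
  have hr2 : r ^ 2 = p - 1 := Real.sq_sqrt (by linarith)
  have hpol := two_mul_abs_mulVec_dotProduct_le (P := (2 * r) • P) (Q := (p - 2) • Q)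
    (by rw [Matrix.transpose_smul, hQ]) (fun γ => by
      simpa only [Matrix.smul_mulVec, smul_dotProduct, smul_eq_mul, abs_mul, mul_assoc]
        using h γ) α (r • β)
  simp only [Matrix.smul_mulVec, Matrix.mulVec_smul, smul_dotProduct, dotProduct_smul,
    smul_eq_mul, abs_mul, abs_of_pos hr] at hpol
  have hcross : |p - 2| * |Q *ᵥ α ⬝ᵥ β| ≤ P *ᵥ α ⬝ᵥ α + (p - 1) * (P *ᵥ β ⬝ᵥ β) := by
    rw [← hr2]
    nlinarith
  have hjForm : jForm p P Q α β
      = (P *ᵥ α ⬝ᵥ α + (p - 1) * (P *ᵥ β ⬝ᵥ β) + (p - 2) * (Q *ᵥ α ⬝ᵥ β)) / p := by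
    rw [jForm]
    field_simp
  rw [hjForm]
  have := neg_abs_le ((p - 2) * (Q *ᵥ α ⬝ᵥ β))
  rw [abs_mul] at this
  exact div_nonneg (by linarith) hp0.le

theorem forall_jForm_nonneg_iff {p : ℝ} (hp : 1 < p) {P Q : Matrix (Fin n) (Fin n) ℝ}
    (hQ : Qᵀ = Q) : (∀ α β, 0 ≤ jForm p P Q α β) ↔
      ∀ γ, |p - 2| * |Q *ᵥ γ ⬝ᵥ γ| ≤ 2 * √(p - 1) * (P *ᵥ γ ⬝ᵥ γ) :=
  ⟨abs_mul_le_of_forall_jForm_nonneg hp, jForm_nonneg_of_forall_abs_mul_le hp hQ⟩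

theorem eq_zero_or_abs_arg_le_arccos_iff {c : ℝ} (hc : |c| ≤ 1) (z : ℂ) :
    z = 0 ∨ |z.arg| ≤ arccos c ↔ c * ‖z‖ ≤ z.re := by
  rcases eq_or_ne z 0 with rfl | hz
  · simp
  rw [or_iff_right hz, ← Real.strictAntiOn_cos.le_iff_ge ⟨arccos_nonneg c, arccos_le_pi c⟩
    ⟨abs_nonneg _, Complex.abs_arg_le_pi z⟩, cos_abs, Complex.cos_arg hz,
    cos_arccos (abs_le.1 hc).1 (abs_le.1 hc).2, le_div_iff₀ (norm_pos_iff.mpr hz)]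

theorem abs_one_sub_two_div_le_one {p : ℝ} (hp : 1 ≤ p) : |1 - 2 / p| ≤ 1 := by
  have hp0 : 0 < p := one_pos.trans_le hp
  have h₁ : 0 ≤ 2 / p := by positivity
  have h₂ : 2 / p ≤ 2 := by rw [div_le_iff₀ hp0]; linarith
  rw [abs_le]
  constructor <;> linarith

theorem abs_one_sub_two_div_mul_norm_le_re_iff {p : ℝ} (hp : 1 < p) (z : ℂ) :
    |1 - 2 / p| * ‖z‖ ≤ z.re ↔ |p - 2| * |z.im| ≤ 2 * √(p - 1) * z.re := by
  have hp0 : 0 < p := one_pos.trans hp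
  have hr : 0 < √(p - 1) := Real.sqrt_pos.mpr (by linarith)
  have hc : |1 - 2 / p| = |p - 2| / p := by
    rw [← abs_of_pos hp0, ← abs_div, abs_of_pos hp0, sub_div, div_self hp0.ne']
  rw [hc, Complex.norm_eq_sqrt_sq_add_sq]
  have hsqrt : √(z.re ^ 2 + z.im ^ 2) ^ 2 = z.re ^ 2 + z.im ^ 2 := Real.sq_sqrt (by positivity)
  have hr2 : √(p - 1) ^ 2 = p - 1 := Real.sq_sqrt (by linarith)
  constructor
  · intro h
    have hre : 0 ≤ z.re := le_trans (by positivity) h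
    have h2 := pow_le_pow_left₀ (by positivity) h 2
    rw [mul_pow, div_pow, sq_abs, hsqrt, div_mul_eq_mul_div, div_le_iff₀ (by positivity)] at h2
    rw [← abs_mul, ← sq_le_sq₀ (abs_nonneg _) (by positivity), sq_abs, mul_pow (2 * _),
      mul_pow 2, hr2]
    nlinarith
  · intro h
    have hre : 0 ≤ z.re := (mul_nonneg_iff_of_pos_left (by positivity)).1
      ((by positivity : 0 ≤ |p - 2| * |z.im|).trans h)
    have h2 := pow_le_pow_left₀ (by positivity) h 2
    rw [mul_pow, mul_pow (2 * _), mul_pow 2, sq_abs, sq_abs, hr2] at h2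
    rw [← sq_le_sq₀ (by positivity) hre, mul_pow, div_pow, sq_abs, hsqrt, div_mul_eq_mul_div,
      div_le_iff₀ (by positivity)]
    nlinarith

end Paper

open Paper

theorem statement10_general (n : ℕ) (p : ℝ) (hp : 1 < p)
    (U V : Matrix (Fin n) (Fin n) ℝ) :
    List.TFAE [
      0 ≤ Paper.Deltap p (Paper.symPart (Paper.cplx U V)),
      ∀ α : Fin n → ℝ,
        |p - 2| * |Paper.rdot (V.mulVec α) α|
          ≤ 2 * Real.sqrt (p - 1) * Paper.rdot (U.mulVec α) α,
      ∀ α : Fin n → ℝ,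
        Paper.herm ((Paper.cplx U V).mulVec (fun j => (α j : ℂ))) (fun j => (α j : ℂ)) = 0 ∨
        |Complex.arg (Paper.herm ((Paper.cplx U V).mulVec (fun j => (α j : ℂ)))
            (fun j => (α j : ℂ)))| ≤ Real.arccos |1 - 2 / p| ] := by
  tfae_have 1 ↔ 2 := by
    rw [symPart_cplx, zero_le_Deltap_cplx_iff (symPart_transpose V), forall_jForm_nonneg_iff hp
      (symPart_transpose V)]
    simp only [rdot_eq_dotProduct, symPart_mulVec_dotProduct_self]
  tfae_have 2 ↔ 3 := by
    refine forall_congr' fun α => ?_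
    rw [herm_cplx_mulVec_ofReal, eq_zero_or_abs_arg_le_arccos_iff
      ((abs_abs _).trans_le (abs_one_sub_two_div_le_one hp.le)),
      abs_one_sub_two_div_mul_norm_le_re_iff hp]
    rfl
  tfae_finish

/-- with `A = U + iV`, `U_s` positive definite and `A_s = (A + Aᵀ)/2`,
the following are equivalent: (1) `Δ_p(A_s) ≥ 0`; (2) `|p−2||⟨Vα,α⟩| ≤ 2√(p−1)⟨Uα,α⟩`
for all real `α`; (3) `⟨Aα,α⟩` lies in the closed sector of half-angle
`φ_p = arccos|1−2/p|` for all real `α`. -/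
theorem statement10 (n : ℕ) (p : ℝ) (hp : 1 < p)
    (U V : Matrix (Fin n) (Fin n) ℝ)
    (hUs : ∀ α : Fin n → ℝ, α ≠ 0 → 0 < Paper.rdot ((Paper.symPart U).mulVec α) α) :
    List.TFAE [
      0 ≤ Paper.Deltap p (Paper.symPart (Paper.cplx U V)),
      ∀ α : Fin n → ℝ,
        |p - 2| * |Paper.rdot (V.mulVec α) α|
          ≤ 2 * Real.sqrt (p - 1) * Paper.rdot (U.mulVec α) α,
      ∀ α : Fin n → ℝ,
        Paper.herm ((Paper.cplx U V).mulVec (fun j => (α j : ℂ))) (fun j => (α j : ℂ)) = 0 ∨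
        |Complex.arg (Paper.herm ((Paper.cplx U V).mulVec (fun j => (α j : ℂ)))
            (fun j => (α j : ℂ)))| ≤ Real.arccos |1 - 2 / p| ] :=
  statement10_general n p hp U V
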